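/- Suppose f ∈ Q satisfies pr_Q(f(Ox)) = f(x) for every orthogonal matrix O ∈ O(n). Then f = c·(x_1²+…+x_n²)² for some c ∈ ℝ. -/
import Mathlib


open Finset MvPolynomial Matrix

noncomputable section

/-- The projection `pr_Q` of degree-4 forms onto the space `Q` of even quartics:
it keeps exactly the coefficients of the monomials `x i² x j²`. -/
def prQ {n : ℕ} (p : MvPolynomial (Fin n) ℝ) : MvPolynomial (Fin n) ℝ :=
  (∑ i : Fin n, C (coeff (Finsupp.single i 4) p) * X i ^ 4)
    + ∑ i : Fin n, ∑ j ∈ Finset.univ.filter (fun j => i < j),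
        C (coeff (Finsupp.single i 2 + Finsupp.single j 2) p) * (X i ^ 2 * X j ^ 2)

section Aux

lemma four_single {n : ℕ} (i m1 m2 m3 m4 : Fin n) :
    (Finsupp.single m1 1 + Finsupp.single m2 1 + Finsupp.single m3 1 + Finsupp.single m4 1
      = Finsupp.single i 4) ↔ (m1 = i ∧ m2 = i ∧ m3 = i ∧ m4 = i) := by
  constructor
  · intro h
    have key := fun m => DFunLike.congr_fun h m
    simp only [Finsupp.add_apply, Finsupp.single_apply] at key
    refine ⟨?_, ?_, ?_, ?_⟩
    · by_contra hc
      have h1 := key m1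
      rw [if_neg (fun h : i = m1 => hc h.symm)] at h1
      split_ifs at h1 <;> omega
    · by_contra hc
      have h1 := key m2
      rw [if_neg (fun h : i = m2 => hc h.symm)] at h1
      split_ifs at h1 <;> omega
    · by_contra hc
      have h1 := key m3
      rw [if_neg (fun h : i = m3 => hc h.symm)] at h1
      split_ifs at h1 <;> omega
    · by_contra hc
      have h1 := key m4
      rw [if_neg (fun h : i = m4 => hc h.symm)] at h1
      split_ifs at h1 <;> omega
  · rintro ⟨rfl, rfl, rfl, rfl⟩
    ext m; simp [Finsupp.single_apply]; split_ifs <;> rfl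

lemma coeffA {n : ℕ} (i : Fin n) (c d : Fin n → ℝ) :
    coeff (Finsupp.single i 4)
      ((∑ m, C (c m) * X m)^2 * ((∑ m, C (d m) * X m : MvPolynomial (Fin n) ℝ))^2)
      = (c i)^2 * (d i)^2 := by
  simp only [sq, Finset.sum_mul_sum, C_mul_X_eq_monomial, monomial_mul]
  simp only [Finset.sum_mul_sum, monomial_mul, coeff_sum, coeff_monomial]
  have key : ∀ m1 m2 m3 m4 : Fin n,
      (if Finsupp.single m1 1 + Finsupp.single m2 1 + (Finsupp.single m3 1 + Finsupp.single m4 1)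
        = Finsupp.single i 4 then c m1 * c m2 * (d m3 * d m4) else 0)
      = (if m1 = i then (if m2 = i then (if m3 = i then (if m4 = i then
          c m1 * c m2 * (d m3 * d m4) else 0) else 0) else 0) else 0) := by
    intro m1 m2 m3 m4
    rw [← add_assoc]
    simp only [four_single, ite_and]
  simp only [key, Finset.sum_ite_irrel, Finset.sum_ite_eq', Finset.sum_const_zero,
    Finset.mem_univ, if_true]

lemma two_single_ne {n : ℕ} {i' j' i : Fin n} (h : i' ≠ j') :
    Finsupp.single i' 2 + Finsupp.single j' 2 ≠ (Finsupp.single i 4 : Fin n →₀ ℕ) := by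
  intro h4
  have h1 := DFunLike.congr_fun h4 i'
  simp only [Finsupp.add_apply, Finsupp.single_apply, if_pos rfl, if_neg h] at h1
  split_ifs at h1 <;> omega

lemma coeffB {n : ℕ} (i k l : Fin n) :
    coeff (Finsupp.single i 4) ((X k : MvPolynomial (Fin n) ℝ)^2 * (X l)^2)
      = if k = i then (if l = i then 1 else 0) else 0 := by
  rw [X_pow_eq_monomial, X_pow_eq_monomial, monomial_mul, one_mul, coeff_monomial]
  by_cases hkl : k = l
  · subst hkl
    have hsum : Finsupp.single k 2 + Finsupp.single k 2 = (Finsupp.single k 4 : Fin n →₀ ℕ) := by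
      ext m; simp [Finsupp.single_apply]; split_ifs <;> rfl
    rw [hsum]
    by_cases hk : k = i
    · subst hk; simp
    · rw [if_neg (fun h => hk (Finsupp.single_left_injective (by norm_num) h)), if_neg hk]
  · rw [if_neg (two_single_ne hkl)]
    by_cases hk : k = i
    · by_cases hl : l = i
      · exact absurd (hk.trans hl.symm) hkl
      · simp [hk, hl]
    · simp [hk]

lemma coeffC {n : ℕ} (i : Fin n) (g : MvPolynomial (Fin n) ℝ) :
    coeff (Finsupp.single i 4) (prQ g) = coeff (Finsupp.single i 4) g := by
  rw [prQ, coeff_add]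
  have h2 : coeff (Finsupp.single i 4)
      (∑ i' : Fin n, ∑ j' ∈ Finset.univ.filter (fun j' => i' < j'),
        C (coeff (Finsupp.single i' 2 + Finsupp.single j' 2) g)
          * ((X i' : MvPolynomial (Fin n) ℝ) ^ 2 * X j' ^ 2)) = 0 := by
    rw [coeff_sum]
    refine Finset.sum_eq_zero fun i' _ => ?_
    rw [coeff_sum]
    refine Finset.sum_eq_zero fun j' hj' => ?_
    rw [coeff_C_mul, coeffB]
    have hij : i' ≠ j' := ne_of_lt (Finset.mem_filter.mp hj').2
    by_cases h1 : i' = i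
    · by_cases h2 : j' = i
      · exact absurd (h1.trans h2.symm) hij
      · simp [h1, h2]
    · simp [h1]
  have h1 : coeff (Finsupp.single i 4)
      (∑ i' : Fin n, C (coeff (Finsupp.single i' 4) g) * (X i' : MvPolynomial (Fin n) ℝ) ^ 4)
      = coeff (Finsupp.single i 4) g := by
    rw [coeff_sum, Finset.sum_eq_single i]
    · rw [coeff_C_mul, coeff_X_pow, if_pos rfl]; ring
    · intro b _ hb
      rw [coeff_C_mul, coeff_X_pow, if_neg, mul_zero]
      intro h
      exact hb (Finsupp.single_left_injective (by norm_num) h)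
    · simp
  rw [h1, h2, add_zero]

def rotM {n : ℕ} (i j : Fin n) : Matrix (Fin n) (Fin n) ℝ :=
  Matrix.of fun k l =>
    if k = i then (if l = i then (Real.sqrt 2)⁻¹ else if l = j then (Real.sqrt 2)⁻¹ else 0)
    else if k = j then (if l = i then (Real.sqrt 2)⁻¹ else if l = j then -(Real.sqrt 2)⁻¹ else 0)
    else if l = k then 1 else 0

lemma s_mul_s : (Real.sqrt 2)⁻¹ * (Real.sqrt 2)⁻¹ = 1/2 := by
  rw [← mul_inv, Real.mul_self_sqrt (by norm_num)]
  norm_num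

lemma rotM_orth {n : ℕ} {i j : Fin n} (h : i ≠ j) : rotM i j * (rotM i j)ᵀ = 1 := by
  have hs := s_mul_s
  have e1 : ∀ m, rotM i j i m
      = if m = i then (Real.sqrt 2)⁻¹ else if m = j then (Real.sqrt 2)⁻¹ else 0 :=
    fun m => by simp [rotM]
  have e2 : ∀ m, rotM i j j m
      = if m = i then (Real.sqrt 2)⁻¹ else if m = j then -(Real.sqrt 2)⁻¹ else 0 :=
    fun m => by simp [rotM, Ne.symm h]
  have e3 : ∀ k, k ≠ i → k ≠ j → ∀ m, rotM i j k m = if m = k then 1 else 0 :=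
    fun k hk1 hk2 m => by simp [rotM, hk1, hk2]
  ext k l
  rw [mul_apply]
  simp only [transpose_apply]
  by_cases hk1 : k = i
  · rw [hk1]
    by_cases hl1 : l = i
    · rw [hl1]
      rw [Fintype.sum_eq_add i j h (fun m ⟨hm1, hm2⟩ => by rw [e1]; simp [hm1, hm2])]
      rw [e1, e1, Matrix.one_apply_eq]
      simp only [eq_self_iff_true, if_true, if_neg (Ne.symm h)]
      rw [hs]; norm_num
    · by_cases hl2 : l = j
      · rw [hl2]
        rw [Fintype.sum_eq_add i j h (fun m ⟨hm1, hm2⟩ => by rw [e1, e2]; simp [hm1, hm2])]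
        rw [e1, e2, e1, e2, Matrix.one_apply_ne h]
        simp [Ne.symm h, hs]
      · rw [Fintype.sum_eq_single l
          (fun m hm => by rw [e1, e3 l hl1 hl2]; simp [hm])]
        rw [e1, Matrix.one_apply_ne (fun hh : i = l => hl1 hh.symm)]
        simp [hl1, hl2]
  · by_cases hk2 : k = j
    · rw [hk2]
      by_cases hl1 : l = i
      · rw [hl1]
        rw [Fintype.sum_eq_add i j h (fun m ⟨hm1, hm2⟩ => by rw [e2, e1]; simp [hm1, hm2])]
        rw [e2, e1, e2, e1, Matrix.one_apply_ne (Ne.symm h)]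
        simp [Ne.symm h, hs]
      · by_cases hl2 : l = j
        · rw [hl2]
          rw [Fintype.sum_eq_add i j h (fun m ⟨hm1, hm2⟩ => by rw [e2]; simp [hm1, hm2])]
          rw [e2, e2, Matrix.one_apply_eq]
          simp only [eq_self_iff_true, if_true, if_neg (Ne.symm h), neg_mul_neg]
          rw [hs]; norm_num
        · rw [Fintype.sum_eq_single l
            (fun m hm => by rw [e2, e3 l hl1 hl2]; simp [hm])]
          rw [e2, Matrix.one_apply_ne (fun hh : j = l => hl2 hh.symm)]
          simp [hl1, hl2]
    · rw [Fintype.sum_eq_single k (fun m hm => by rw [e3 k hk1 hk2]; simp [hm])]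
      rw [e3 k hk1 hk2 k, if_pos rfl, one_mul]
      by_cases hl1 : l = i
      · rw [hl1, e1, Matrix.one_apply_ne (fun hh : k = i => hk1 hh)]
        simp [hk1, hk2]
      · by_cases hl2 : l = j
        · rw [hl2, e2, Matrix.one_apply_ne (fun hh : k = j => hk2 hh)]
          simp [hk1, hk2]
        · rw [e3 l hl1 hl2 k, Matrix.one_apply]

lemma coeff_aeval {n : ℕ} (i : Fin n) (a : Fin n → Fin n → ℝ)
    (O : Matrix (Fin n) (Fin n) ℝ) :
    coeff (Finsupp.single i 4)
      (aeval (fun k => ∑ m, C (O k m) * X m)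
        (∑ k, ∑ l, C (a k l) * ((X k : MvPolynomial (Fin n) ℝ)^2 * (X l)^2)))
      = ∑ k, ∑ l, a k l * ((O k i)^2 * (O l i)^2) := by
  simp only [map_sum, _root_.map_mul, map_pow, aeval_C, aeval_X, algebraMap_eq,
    coeff_sum, coeff_C_mul, coeffA]

lemma rotM_col_sq {n : ℕ} {i j : Fin n} (h : i ≠ j) {t : Fin n} (ht : t = i ∨ t = j)
    (k : Fin n) :
    (rotM i j k t)^2 = if k = i then 1/2 else if k = j then 1/2 else 0 := by
  have hs := s_mul_s
  by_cases hk1 : k = i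
  · rcases ht with rfl | rfl <;> simp [rotM, hk1, h, Ne.symm h, sq, hs]
  · by_cases hk2 : k = j
    · rcases ht with rfl | rfl <;> simp [rotM, hk1, hk2, h, Ne.symm h, sq, hs]
    · rcases ht with rfl | rfl <;> simp [rotM, hk1, hk2, Ne.symm hk1, Ne.symm hk2]

lemma sum_weights {n : ℕ} {i j : Fin n} (h : i ≠ j) (a : Fin n → Fin n → ℝ)
    (w : Fin n → ℝ) (hw : ∀ k, w k = if k = i then 1/2 else if k = j then 1/2 else 0) :
    ∑ k, ∑ l, a k l * (w k * w l) = (a i i + a i j + a j i + a j j)/4 := by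
  have hz : ∀ k, k ≠ i → k ≠ j → w k = 0 := fun k hk1 hk2 => by rw [hw]; simp [hk1, hk2]
  have hwi : w i = 1/2 := by rw [hw]; simp
  have hwj : w j = 1/2 := by rw [hw]; simp [Ne.symm h]
  rw [Fintype.sum_eq_add i j h (fun k ⟨hk1, hk2⟩ =>
    Finset.sum_eq_zero fun l _ => by rw [hz k hk1 hk2]; ring)]
  rw [Fintype.sum_eq_add i j h (fun l ⟨hl1, hl2⟩ => by rw [hz l hl1 hl2]; ring)]
  rw [Fintype.sum_eq_add i j h (fun l ⟨hl1, hl2⟩ => by rw [hz l hl1 hl2]; ring)]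
  rw [hwi, hwj]; ring

lemma coeff_p {n : ℕ} (i : Fin n) (a : Fin n → Fin n → ℝ) :
    coeff (Finsupp.single i 4)
      (∑ k, ∑ l, C (a k l) * ((X k : MvPolynomial (Fin n) ℝ)^2 * (X l)^2)) = a i i := by
  simp only [coeff_sum, coeff_C_mul, coeffB, mul_ite, mul_one, mul_zero,
    Finset.sum_ite_irrel, Finset.sum_ite_eq', Finset.sum_const_zero, Finset.mem_univ, if_true]

end Aux

/-- If `f ∈ Q` satisfies `pr_Q(f(Ox)) = f(x)` for every
orthogonal matrix `O ∈ O(n)`, then `f = c (x_1² + … + x_n²)²` for some `c ∈ ℝ`. -/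
theorem stmt17 (n : ℕ) (hn : 2 ≤ n) (p : MvPolynomial (Fin n) ℝ)
    (hp : ∃ a : Fin n → Fin n → ℝ, (∀ i j, a i j = a j i) ∧
      p = ∑ i, ∑ j, C (a i j) * ((X i : MvPolynomial (Fin n) ℝ)^2 * (X j)^2))
    (hinv : ∀ O : Matrix (Fin n) (Fin n) ℝ, O * Oᵀ = 1 →
      prQ (MvPolynomial.aeval (fun i => ∑ j, C (O i j) * X j) p) = p) :
    ∃ c : ℝ, p = C c * (∑ i, (X i : MvPolynomial (Fin n) ℝ)^2)^2 := by
  obtain ⟨a, hsym, rfl⟩ := hp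
  -- the key consequence of invariance under the reflection `rotM i j`
  have main : ∀ i j : Fin n, i ≠ j → a i i = a j j ∧ a i j = a i i := by
    intro i j hij
    have hO := hinv (rotM i j) (rotM_orth hij)
    have Ei := congrArg (coeff (Finsupp.single i 4)) hO
    have Ej := congrArg (coeff (Finsupp.single j 4)) hO
    rw [coeffC, coeff_aeval, coeff_p] at Ei
    rw [coeffC, coeff_aeval, coeff_p] at Ej
    rw [show (∑ k, ∑ l, a k l * ((rotM i j k i)^2 * (rotM i j l i)^2))
        = ∑ k, ∑ l, a k l * ((fun k => (rotM i j k i)^2) k * (fun k => (rotM i j k i)^2) l)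
        from rfl,
      sum_weights hij a _ (fun k => rotM_col_sq hij (Or.inl rfl) k)] at Ei
    rw [show (∑ k, ∑ l, a k l * ((rotM i j k j)^2 * (rotM i j l j)^2))
        = ∑ k, ∑ l, a k l * ((fun k => (rotM i j k j)^2) k * (fun k => (rotM i j k j)^2) l)
        from rfl,
      sum_weights hij a _ (fun k => rotM_col_sq hij (Or.inr rfl) k)] at Ej
    have hji := hsym j i
    constructor <;> linarith
  set z : Fin n := ⟨0, by omega⟩ with hz
  refine ⟨a z z, ?_⟩
  have hall : ∀ k l : Fin n, a k l = a z z := by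
    intro k l
    have hdiag : ∀ k : Fin n, a k k = a z z := by
      intro k
      by_cases hkz : k = z
      · rw [hkz]
      · exact (main k z hkz).1
    by_cases hkl : k = l
    · rw [hkl]; exact hdiag l
    · rw [(main k l hkl).2]; exact hdiag k
  have expand : C (a z z) * ((∑ i, (X i : MvPolynomial (Fin n) ℝ)^2)^2)
      = ∑ k, ∑ l, C (a z z) * ((X k : MvPolynomial (Fin n) ℝ)^2 * (X l)^2) := by
    rw [sq, Finset.sum_mul_sum, Finset.mul_sum]
    refine Finset.sum_congr rfl fun k _ => ?_
    rw [Finset.mul_sum]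
  rw [expand]
  refine Finset.sum_congr rfl fun k _ => Finset.sum_congr rfl fun l _ => ?_
  rw [hall k l]
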